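/- The origin 0_{n+1} is not in the interior of the epigraphical set E(Ā, b̄, B), provided the nominal feasible set {x : Āx + b̄ ∈ −K} is nonempty. -/

import Mathlib

open Finset Pointwise

noncomputable def enorm2 {k : ℕ} (v : Fin k → ℝ) : ℝ := Real.sqrt (∑ i, v i ^ 2)

def coneHull {k : ℕ} (X : Set (Fin k → ℝ)) : Set (Fin k → ℝ) :=
  {y | y = 0 ∨ ∃ t : ℝ, 0 ≤ t ∧ ∃ c ∈ convexHull ℝ X, y = t • c}

def dualCone {m : ℕ} (K : Set (Fin m → ℝ)) : Set (Fin m → ℝ) :=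
  {a | ∀ x ∈ K, 0 ≤ ∑ i, a i * x i}

def Feas {m n : ℕ} (K : Set (Fin m → ℝ)) (Abar : Fin m → Fin n → ℝ) (bbar : Fin m → ℝ)
    (r : Fin m → ℝ) : Set (Fin n → ℝ) :=
  {x | ∀ (a : Fin m → Fin n → ℝ) (b : Fin m → ℝ),
      (∀ i, enorm2 (Fin.snoc (a i - Abar i) (b i - bbar i)) ≤ r i) →
      (fun i => (∑ j, a i j * x j) + b i) ∈ -K}

def Adm {m n : ℕ} (K : Set (Fin m → ℝ)) (Abar : Fin m → Fin n → ℝ) (bbar : Fin m → ℝ) :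
    Set (Fin m → ℝ) :=
  {r | (∀ i, 0 ≤ r i) ∧ (Feas K Abar bbar r).Nonempty}

noncomputable def rrf {m n : ℕ} (K : Set (Fin m → ℝ)) (Abar : Fin m → Fin n → ℝ)
    (bbar : Fin m → ℝ) : ℝ :=
  sSup {α : ℝ | 0 ≤ α ∧ (fun _ => α) ∈ Adm K Abar bbar}

def Epi {m n : ℕ} (Abar : Fin m → Fin n → ℝ) (bbar : Fin m → ℝ) (B : Set (Fin m → ℝ)) :
    Set (Fin (n + 1) → ℝ) :=
  {y | ∃ l ∈ B, ∃ w : ℝ, 0 ≤ w ∧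
    y = Fin.snoc (fun j => ∑ i, l i * Abar i j) (-(∑ i, l i * bbar i) + w)}

noncomputable def edist0 {m n : ℕ} (Abar : Fin m → Fin n → ℝ) (bbar : Fin m → ℝ)
    (B : Set (Fin m → ℝ)) : ℝ :=
  sInf {t : ℝ | ∃ y ∈ Epi Abar bbar B, t = enorm2 y}

def IsCompactBase {m : ℕ} (C B : Set (Fin m → ℝ)) : Prop :=
  IsCompact B ∧ Convex ℝ B ∧ B ⊆ C ∧ (0 : Fin m → ℝ) ∉ B ∧
    C = {y | ∃ t : ℝ, 0 ≤ t ∧ ∃ b ∈ B, y = t • b}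

def IsClosedConvexCone {m : ℕ} (K : Set (Fin m → ℝ)) : Prop :=
  IsClosed K ∧ Convex ℝ K ∧ ∀ t : ℝ, 0 ≤ t → ∀ x ∈ K, t • x ∈ K

noncomputable def c1 {m : ℕ} (n : ℕ) (B : Set (Fin m → ℝ)) : ℝ :=
  (sSup {t : ℝ | ∃ l ∈ B, ∃ u : Fin m → (Fin (n + 1) → ℝ),
    (∀ i, enorm2 (u i) ≤ 1) ∧ t = enorm2 (∑ i, l i • u i)})⁻¹

noncomputable def c2 {m : ℕ} (B : Set (Fin m → ℝ)) : ℝ :=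
  (sInf {t : ℝ | ∃ l ∈ B, t = ∑ i, |l i|})⁻¹

/- If the origin were interior to `Epi Abar bbar B`, the set would contain a point `(0, -t)`
with `t > 0`, i.e. some `l ∈ B ⊆ K*` with `lᵀ Abar = 0` and `lᵀ bbar ≥ t`. Pairing `l` with
`-(Abar x + bbar) ∈ K` for a nominally feasible `x` gives `lᵀ bbar ≤ -lᵀ Abar x = 0`. -/

open Filter Topology

lemma exists_pos_smul_mem_of_mem_nhds_zero {E : Type*} [AddCommGroup E] [Module ℝ E]
    [TopologicalSpace E] [ContinuousSMul ℝ E] {s : Set E} (hs : s ∈ 𝓝 0) (v : E) :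
    ∃ t : ℝ, 0 < t ∧ t • v ∈ s := by
  have hlim : Tendsto (fun t : ℝ => t • v) (𝓝[>] 0) (𝓝 0) := by
    have hcont : Continuous fun t : ℝ => t • v := continuous_id.smul continuous_const
    simpa using (hcont.tendsto 0).mono_left nhdsWithin_le_nhds
  obtain ⟨t, hts, ht⟩ := ((hlim.eventually hs).and self_mem_nhdsWithin).exists
  exact ⟨t, ht, hts⟩

lemma sum_mul_sum_eq_sum_sum_mul {m n : ℕ} (l : Fin m → ℝ) (A : Fin m → Fin n → ℝ)
    (x : Fin n → ℝ) :
    ∑ i, l i * ∑ j, A i j * x j = ∑ j, (∑ i, l i * A i j) * x j := by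
  simp_rw [Finset.mul_sum, Finset.sum_mul, mul_assoc]
  exact Finset.sum_comm

lemma sum_mul_le_zero_of_mem_dualCone {m n : ℕ} {K : Set (Fin m → ℝ)} {l : Fin m → ℝ}
    (hl : l ∈ dualCone K) {Abar : Fin m → Fin n → ℝ} {bbar : Fin m → ℝ}
    (hA : ∀ j, ∑ i, l i * Abar i j = 0) {x : Fin n → ℝ}
    (hx : (fun i => (∑ j, Abar i j * x j) + bbar i) ∈ -K) :
    ∑ i, l i * bbar i ≤ 0 := by
  have hpair := hl _ (Set.mem_neg.mp hx)
  simpa only [Pi.neg_apply, mul_neg, mul_add, Finset.sum_add_distrib, Finset.sum_neg_distrib,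
    sum_mul_sum_eq_sum_sum_mul, hA, zero_mul, Finset.sum_const_zero, zero_add,
    neg_nonneg] using hpair

lemma exists_of_smul_snoc_mem_Epi {m n : ℕ} {Abar : Fin m → Fin n → ℝ} {bbar : Fin m → ℝ}
    {B : Set (Fin m → ℝ)} {t : ℝ}
    (ht : t • (Fin.snoc 0 (-1) : Fin (n + 1) → ℝ) ∈ Epi Abar bbar B) :
    ∃ l ∈ B, (∀ j, ∑ i, l i * Abar i j = 0) ∧ t ≤ ∑ i, l i * bbar i := by
  obtain ⟨l, hlB, w, hw, heq⟩ := ht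
  refine ⟨l, hlB, fun j => ?_, ?_⟩
  · simpa using (congrFun heq (Fin.castSucc j)).symm
  · have hlast := congrFun heq (Fin.last n)
    simp only [Pi.smul_apply, Fin.snoc_last, smul_eq_mul] at hlast
    linarith

theorem statement11_general {m n : ℕ} (K : Set (Fin m → ℝ))
    (B : Set (Fin m → ℝ)) (hB : IsCompactBase (dualCone K) B)
    (Abar : Fin m → Fin n → ℝ) (bbar : Fin m → ℝ)
    (hfeas : ∃ x : Fin n → ℝ, (fun i => (∑ j, Abar i j * x j) + bbar i) ∈ -K) :
    (0 : Fin (n + 1) → ℝ) ∉ interior (Epi Abar bbar B) := by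
  intro h0
  obtain ⟨t, htpos, htmem⟩ :=
    exists_pos_smul_mem_of_mem_nhds_zero (mem_interior_iff_mem_nhds.mp h0) (Fin.snoc 0 (-1))
  obtain ⟨l, hlB, hA, htl⟩ := exists_of_smul_snoc_mem_Epi htmem
  obtain ⟨x, hx⟩ := hfeas
  have hnonpos := sum_mul_le_zero_of_mem_dualCone (hB.2.2.1 hlB) hA hx
  linarith

/-- the origin is not in the interior of the epigraphical set when the
nominal problem is feasible. -/
theorem statement11 {m n : ℕ} (K : Set (Fin m → ℝ)) (hclosed : IsClosed K) (hconv : Convex ℝ K)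
    (hcone : ∀ t : ℝ, 0 ≤ t → ∀ x ∈ K, t • x ∈ K)
    (hpointed : K ∩ (-K) = {0}) (hint : (interior K).Nonempty)
    (B : Set (Fin m → ℝ)) (hB : IsCompactBase (dualCone K) B)
    (Abar : Fin m → Fin n → ℝ) (bbar : Fin m → ℝ)
    (hfeas : ∃ x : Fin n → ℝ, (fun i => (∑ j, Abar i j * x j) + bbar i) ∈ -K) :
    (0 : Fin (n + 1) → ℝ) ∉ interior (Epi Abar bbar B) :=
  statement11_general K B hB Abar bbar hfeas
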